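/- arXiv:2305.05353 — 3 statements merged into one kernel-verified Lean document; each statement's English description precedes it below -/
import Mathlib

section
/- Let M = (N, I) be a finite matroid with rank function r, let h ≥ 1 be an integer, and define r_h : 2^N → ℤ≥0 by r_h(U) := min_{B ⊆ U} ( |U ∖ B| + h·r(B) ) (this is the rank function of the h-fold matroid union of M, by the Nash-Williams formula). Let Q ⊆ N and e ∈ N ∖ Q be such that r_h(Q ∪ {e}) = r_h(Q). Then e ∈ span(D_M(Q, h)). -/
open scoped BigOperators Classical
open MeasureTheory

noncomputable section

/-- A finite matroid on ground set `E`, given by its rank function. -/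
structure FinMatroid (α : Type*) [DecidableEq α] where
  E : Finset α
  r : Finset α → ℕ
  rank_le_card : ∀ A : Finset α, r A ≤ A.card
  rank_mono : ∀ ⦃A B : Finset α⦄, A ⊆ B → r A ≤ r B
  rank_submod : ∀ A B : Finset α, r (A ∪ B) + r (A ∩ B) ≤ r A + r B

variable {α : Type*} [DecidableEq α]

/-- Independence in terms of the rank function. -/
def FinMatroid.Indep (M : FinMatroid α) (I : Finset α) : Prop :=
  I ⊆ M.E ∧ M.r I = I.card

/-- The span (closure) of a set. -/
def FinMatroid.span (M : FinMatroid α) (A : Finset α) : Finset α :=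
  M.E.filter fun e => M.r (insert e A) = M.r A

/-- `M.D S lam` : the unique inclusion-wise maximal maximizer of `|U| - lam * r U`
over `U ⊆ S`, realized as the union of all maximizers. -/
def FinMatroid.D (M : FinMatroid α) (S : Finset α) (lam : ℝ) : Finset α :=
  (S.powerset.filter fun U =>
      ∀ V ∈ S.powerset, (V.card : ℝ) - lam * M.r V ≤ (U.card : ℝ) - lam * M.r U).sup id

/-- The rank-density curve of `M`. -/
def FinMatroid.rdCurve (M : FinMatroid α) : ℝ → ℝ := fun t =>
  sSup {lam : ℝ | 0 ≤ lam ∧ t ≤ (M.r (M.D M.E lam) : ℝ)}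

/-- Restriction of a matroid to a subset. -/
def FinMatroid.restrict (M : FinMatroid α) (T : Finset α) : FinMatroid α where
  E := M.E ∩ T
  r := fun A => M.r (A ∩ T)
  rank_le_card := fun A =>
    (M.rank_le_card _).trans (Finset.card_le_card Finset.inter_subset_left)
  rank_mono := fun A B hAB =>
    M.rank_mono (Finset.inter_subset_inter hAB (Finset.Subset.refl T))
  rank_submod := fun A B => by
    have h1 : (A ∪ B) ∩ T = (A ∩ T) ∪ (B ∩ T) := by ext x; simp only [Finset.mem_inter, Finset.mem_union]; tauto
    have h2 : (A ∩ B) ∩ T = (A ∩ T) ∩ (B ∩ T) := by ext x; simp only [Finset.mem_inter]; tauto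
    rw [h1, h2]; exact M.rank_submod _ _

/-- `eta n w a` : the expected maximum weight among a uniformly random subset of
`⌊a⌋` of the `n` weights `w`, with value `0` for `a < 1`. -/
def eta (n : ℕ) (w : Fin n → ℝ) (a : ℝ) : ℝ :=
  if a < 1 then 0 else
    (∑ R ∈ Finset.powersetCard ⌊a⌋.toNat (Finset.univ : Finset (Fin n)),
        R.fold max 0 w) /
      ((Finset.powersetCard ⌊a⌋.toNat (Finset.univ : Finset (Fin n))).card : ℝ)

/-- `FF n w ρ = ∫_0^∞ η(ρ(t)) dt`. -/
def FF (n : ℕ) (w : Fin n → ℝ) (ρ : ℝ → ℝ) : ℝ :=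
  ∫ t in Set.Ioi (0 : ℝ), eta n w (ρ t)

/-- The `(a, b)`-downshift of a curve `ρ`. -/
def downshift (ρ : ℝ → ℝ) (a b : ℝ) : ℝ → ℝ := fun t =>
  let φ : ℝ := if t ≤ 1 then ρ a / b else ρ (a * t) / b
  if 0 < φ ∧ φ < 1 then 1 else φ

/-- `ρt` is an `(a,b)`-approximation of `ρ`: it is non-increasing and nonnegative on
`(0,∞)` and squeezed between the `(a,b)`-downshift of `ρ` and `ρ` on `(0,∞)`. -/
def IsApprox (a b : ℝ) (ρ ρt : ℝ → ℝ) : Prop :=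
  AntitoneOn ρt (Set.Ioi 0) ∧ (∀ t, 0 < t → 0 ≤ ρt t) ∧
    ∀ t, 0 < t → downshift ρ a b t ≤ ρt t ∧ ρt t ≤ ρ t

/-- Probability of event `P` for a random subset `S ⊆ N` including each element
independently with probability `1/2`. -/
def prHalf (N : Finset α) (P : Finset α → Prop) : ℝ :=
  ((N.powerset.filter P).card : ℝ) / 2 ^ N.card


/-- The rank function of the `h`-fold matroid union of `M`, via the
Nash-Williams formula. -/
def FinMatroid.rUnion (M : FinMatroid α) (h : ℕ) (U : Finset α) : ℕ :=
  U.powerset.inf' (Finset.powerset_nonempty U) fun B => (U \ B).card + h * M.r B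

/-!
A minimizer `B` in the Nash-Williams formula for `r_h (Q ∪ {e})` must contain `e`, for
otherwise `r_h (Q ∪ {e}) = r_h Q + 1`. Then `B₀ = B \ {e}` satisfies
`|Q \ B₀| + h r(B₀ ∪ {e}) = r_h Q ≤ |Q \ B₀| + h r(B₀)`, so `e ∈ span B₀` (as `h ≥ 1`) and
`B₀` minimizes `|Q \ B'| + h r(B')`, i.e. maximizes `|B'| - h r(B')` over `B' ⊆ Q`.
Hence `B₀ ⊆ D(Q, h)`, and by submodularity the span is monotone.
-/

namespace FinMatroid

def IsDMaximizer (M : FinMatroid α) (S : Finset α) (lam : ℝ) (U : Finset α) : Prop :=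
  U ⊆ S ∧ ∀ V ⊆ S, (V.card : ℝ) - lam * M.r V ≤ (U.card : ℝ) - lam * M.r U

variable {M : FinMatroid α} {S : Finset α} {lam : ℝ}

theorem IsDMaximizer.subset_D {U : Finset α} (hU : M.IsDMaximizer S lam U) : U ⊆ M.D S lam :=
  Finset.le_sup (f := id) <| Finset.mem_filter.2
    ⟨Finset.mem_powerset.2 hU.1, fun V hV => hU.2 V (Finset.mem_powerset.1 hV)⟩

theorem rank_insert_eq_of_subset {A B : Finset α} {e : α} (hAB : A ⊆ B)
    (hA : M.r (insert e A) = M.r A) : M.r (insert e B) = M.r B := by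
  have hsubmod := M.rank_submod (insert e A) B
  have hunion : insert e A ∪ B = insert e B := by
    rw [Finset.insert_union, Finset.union_eq_right.2 hAB]
  have hinter : M.r A ≤ M.r (insert e A ∩ B) :=
    M.rank_mono (Finset.subset_inter (Finset.subset_insert e A) hAB)
  have hmono := M.rank_mono (Finset.subset_insert e B)
  rw [hunion] at hsubmod
  omega

theorem rUnion_le (h : ℕ) {U B : Finset α} (hB : B ⊆ U) :
    M.rUnion h U ≤ (U \ B).card + h * M.r B :=
  Finset.inf'_le _ (Finset.mem_powerset.2 hB)

theorem exists_rUnion_eq (h : ℕ) (U : Finset α) :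
    ∃ B ⊆ U, M.rUnion h U = (U \ B).card + h * M.r B := by
  obtain ⟨B, hB, hval⟩ := Finset.exists_mem_eq_inf' (Finset.powerset_nonempty U)
    (fun B => (U \ B).card + h * M.r B)
  exact ⟨B, Finset.mem_powerset.1 hB, hval⟩

theorem exists_rUnion_eq_rank_insert (h : ℕ) {Q : Finset α} {e : α} (heQ : e ∉ Q)
    (heq : M.rUnion h (insert e Q) = M.rUnion h Q) :
    ∃ B ⊆ Q, M.rUnion h Q = (Q \ B).card + h * M.r (insert e B) := by
  obtain ⟨B, hBsub, hB⟩ := M.exists_rUnion_eq h (insert e Q)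
  by_cases heB : e ∈ B
  · obtain ⟨B, heB', rfl⟩ : ∃ B', e ∉ B' ∧ insert e B' = B :=
      ⟨B.erase e, Finset.notMem_erase e B, Finset.insert_erase heB⟩
    refine ⟨B, (Finset.subset_insert_iff_of_notMem heB').1
      ((Finset.subset_insert e B).trans hBsub), ?_⟩
    rw [← heq, hB, Finset.insert_sdiff_insert, Finset.sdiff_insert_of_notMem heQ]
  · have hBQ : B ⊆ Q := (Finset.subset_insert_iff_of_notMem heB).1 hBsub
    have hle := M.rUnion_le h hBQ
    rw [Finset.insert_sdiff_of_notMem _ heB,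
      Finset.card_insert_of_notMem fun hx => heQ (Finset.mem_sdiff.1 hx).1] at hB
    omega

theorem isDMaximizer_of_forall_le {h : ℕ} {Q B : Finset α} (hBQ : B ⊆ Q)
    (hB : ∀ B' ⊆ Q, (Q \ B).card + h * M.r B ≤ (Q \ B').card + h * M.r B') :
    M.IsDMaximizer Q h B := by
  refine ⟨hBQ, fun V hV => ?_⟩
  have hle : ((Q \ B).card : ℝ) + h * M.r B ≤ (Q \ V).card + h * M.r V := by
    exact_mod_cast hB V hV
  have hcardB : ((Q \ B).card : ℝ) + B.card = Q.card := by
    exact_mod_cast Finset.card_sdiff_add_card_eq_card hBQ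
  have hcardV : ((Q \ V).card : ℝ) + V.card = Q.card := by
    exact_mod_cast Finset.card_sdiff_add_card_eq_card hV
  linarith

end FinMatroid

theorem statement8_general {α : Type*} [DecidableEq α] (M : FinMatroid α) (h : ℕ) (hh : 1 ≤ h)
    (Q : Finset α) (e : α) (he : e ∈ M.E) (heQ : e ∉ Q)
    (heq : M.rUnion h (insert e Q) = M.rUnion h Q) :
    e ∈ M.span (M.D Q (h : ℝ)) := by
  obtain ⟨B, hBQ, hB⟩ := M.exists_rUnion_eq_rank_insert h heQ heq
  have hmin : ∀ B' ⊆ Q, (Q \ B).card + h * M.r (insert e B) ≤ (Q \ B').card + h * M.r B' :=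
    fun B' hB' => hB ▸ M.rUnion_le h hB'
  have hspan : M.r (insert e B) = M.r B := by
    have hle := Nat.le_of_mul_le_mul_left (Nat.le_of_add_le_add_left (hmin B hBQ)) hh
    exact le_antisymm hle (M.rank_mono (Finset.subset_insert e B))
  have hmax : M.IsDMaximizer Q h B :=
    FinMatroid.isDMaximizer_of_forall_le hBQ (hspan ▸ hmin)
  exact Finset.mem_filter.2 ⟨he, FinMatroid.rank_insert_eq_of_subset hmax.subset_D hspan⟩

theorem statement8 {α : Type*} [DecidableEq α] (M : FinMatroid α) (h : ℕ) (hh : 1 ≤ h)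
    (Q : Finset α) (hQ : Q ⊆ M.E) (e : α) (he : e ∈ M.E) (heQ : e ∉ Q)
    (heq : M.rUnion h (insert e Q) = M.rUnion h Q) :
    e ∈ M.span (M.D Q (h : ℝ)) :=
  statement8_general M h hh Q e he heQ heq

end
end

section
/- Let M = (N, I) be a finite matroid with rank function r, and let S ⊆ N be a random subset containing each element of N independently with probability 1/2. Then Pr[ r(S) ≤ r(N)/8 ] ≤ exp(−r(N)/48). -/
open scoped BigOperators Classical
open MeasureTheory

noncomputable section

variable {α : Type*} [DecidableEq α]

/-!
A basis `B` of `M` has `|B| = r(N)` and all its subsets are independent, so `r(S) ≥ |S ∩ B|`.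
The event thus pushes the binomial variable `|S ∩ B| ~ Bin(r(N), 1/2)` down to an eighth of its
range, and the Chernoff bound with weight `(1/3)^|S ∩ B|` gives probability at most
`((2/3) · 3^(1/8))^r(N) ≤ exp(-r(N)/48)`.
-/

open Finset

namespace FinMatroid

variable (M : FinMatroid α)

lemma rank_empty : M.r ∅ = 0 := Nat.le_zero.mp (by simpa using M.rank_le_card ∅)

lemma rank_insert_le (A : Finset α) (x : α) : M.r (insert x A) ≤ M.r A + 1 := by
  have h := M.rank_submod A {x}
  have hx : M.r {x} ≤ 1 := by simpa using M.rank_le_card {x}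
  rw [union_singleton] at h
  omega

lemma rank_union_eq_of_subset_span {A C : Finset α} (hC : C ⊆ M.span A) :
    M.r (A ∪ C) = M.r A := by
  induction C using Finset.induction_on with
  | empty => simp
  | @insert a C _ ih =>
    rw [insert_subset_iff] at hC
    have ha : M.r (insert a A) = M.r A := (mem_filter.1 hC.1).2
    have hAC := ih hC.2
    have hsub := M.rank_submod (A ∪ C) (insert a A)
    have h₁ : A ∪ C ∪ insert a A = A ∪ insert a C := by ext; simp; tauto
    have h₂ : M.r A ≤ M.r ((A ∪ C) ∩ insert a A) :=
      M.rank_mono fun y hy => by simp [hy]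
    have h₃ : M.r (A ∪ C) ≤ M.r (A ∪ insert a C) :=
      M.rank_mono (union_subset_union_right (subset_insert a C))
    rw [h₁] at hsub
    omega

lemma exists_indep_card_eq_rank : ∃ B, M.Indep B ∧ B.card = M.r M.E := by
  obtain ⟨B, hBmem, hBmax⟩ := exists_max_image (M.E.powerset.filter M.Indep) card
    ⟨∅, by simp [Indep, rank_empty]⟩
  rw [mem_filter] at hBmem
  obtain ⟨-, hB⟩ := hBmem
  -- A maximum-size independent set spans `E`: an element outside its span would extend it.
  have hspan : M.E ⊆ M.span B := by
    intro x hx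
    refine mem_filter.2 ⟨hx, ?_⟩
    by_contra hne
    have hxB : x ∉ B := fun hxB => hne (by rw [insert_eq_of_mem hxB])
    have := M.rank_insert_le B x
    have := M.rank_mono (subset_insert x B)
    have hind : M.Indep (insert x B) :=
      ⟨insert_subset hx hB.1, by rw [card_insert_of_notMem hxB]; have := hB.2; omega⟩
    have := hBmax _ (mem_filter.2 ⟨mem_powerset.2 hind.1, hind⟩)
    rw [card_insert_of_notMem hxB] at this
    omega
  refine ⟨B, hB, ?_⟩
  rw [← hB.2, ← M.rank_union_eq_of_subset_span hspan, union_eq_right.2 hB.1]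

variable {M}

lemma Indep.subset {I J : Finset α} (hJ : M.Indep J) (hIJ : I ⊆ J) : M.Indep I := by
  refine ⟨hIJ.trans hJ.1, ?_⟩
  have h := M.rank_submod I (J \ I)
  rw [union_sdiff_of_subset hIJ, inter_sdiff_self] at h
  have := M.rank_le_card (J \ I)
  have := M.rank_le_card I
  have := card_sdiff_add_card_eq_card hIJ
  have := hJ.2
  omega

lemma Indep.card_inter_le_rank {B : Finset α} (hB : M.Indep B) (S : Finset α) :
    (S ∩ B).card ≤ M.r S := by
  rw [← (hB.subset inter_subset_right).2]
  exact M.rank_mono inter_subset_left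

end FinMatroid

lemma prHalf_le_of_forall_inter {E B : Finset α} (hB : B ⊆ E) {P Q : Finset α → Prop}
    (h : ∀ S ⊆ E, P S → Q (S ∩ B)) : prHalf E P ≤ prHalf B Q := by
  have hcard : (E.powerset.filter P).card ≤ (B.powerset.filter Q).card * 2 ^ (E \ B).card := by
    rw [← card_powerset (E \ B), ← card_product]
    refine card_le_card_of_injOn (fun S => (S ∩ B, S \ B)) (fun S hS => ?_)
      (fun S _ S' _ hSS' => ?_)
    · simp only [coe_filter, mem_powerset] at hS
      simp only [coe_product, coe_filter, mem_powerset, Set.mem_prod, coe_powerset,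
        Set.mem_preimage, Set.mem_powerset_iff, coe_subset]
      exact ⟨⟨inter_subset_right, h S hS.1 hS.2⟩, sdiff_subset_sdiff hS.1 le_rfl⟩
    · simp only [Prod.mk.injEq] at hSS'
      rw [← sdiff_union_inter S B, ← sdiff_union_inter S' B, hSS'.1, hSS'.2]
  unfold prHalf
  rw [← card_sdiff_add_card_eq_card hB, pow_add,
    div_le_div_iff₀ (by positivity) (by positivity)]
  calc ((E.powerset.filter P).card : ℝ) * 2 ^ B.card
      ≤ (B.powerset.filter Q).card * 2 ^ (E \ B).card * 2 ^ B.card := by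
        gcongr; exact_mod_cast hcard
    _ = _ := by ring

lemma prHalf_card_le_le_div_rpow {β : Type*} (B : Finset β) {x : ℝ} (hx₀ : 0 < x)
    (hx₁ : x ≤ 1) (a : ℝ) :
    prHalf B (fun T => (T.card : ℝ) ≤ a) ≤ ((1 + x) / 2) ^ B.card / x ^ a := by
  have hmgf :
      ((B.powerset.filter fun T => (T.card : ℝ) ≤ a).card : ℝ) * x ^ a ≤ (1 + x) ^ B.card :=
    calc _ = ∑ T ∈ B.powerset.filter (fun T => (T.card : ℝ) ≤ a), x ^ a := by
          rw [sum_const, nsmul_eq_mul]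
      _ ≤ ∑ T ∈ B.powerset.filter (fun T => (T.card : ℝ) ≤ a), x ^ T.card :=
          sum_le_sum fun T hT => by
            rw [← Real.rpow_natCast]
            exact Real.rpow_le_rpow_of_exponent_ge hx₀ hx₁ (mem_filter.1 hT).2
      _ ≤ ∑ T ∈ B.powerset, x ^ T.card :=
          sum_le_sum_of_subset_of_nonneg (filter_subset _ _) fun _ _ _ => by positivity
      _ = (1 + x) ^ B.card := by simpa [add_comm] using sum_pow_mul_eq_add_pow x 1 B
  unfold prHalf
  rw [div_pow, div_div, div_le_div_iff₀ (by positivity) (by positivity)]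
  nlinarith [pow_pos (two_pos (α := ℝ)) B.card]

lemma two_thirds_mul_rpow_le_exp : 2 / 3 * (3 : ℝ) ^ (8⁻¹ : ℝ) ≤ Real.exp (-1 / 48) := by
  -- `3 ≤ (6/5)^8` and `exp(-1/48) ≥ 47/48 ≥ 4/5 = 2/3 · 6/5`
  have hroot : (3 : ℝ) ^ (8⁻¹ : ℝ) ≤ 6 / 5 :=
    (Real.rpow_inv_le_iff_of_pos (by norm_num) (by norm_num) (by norm_num)).2 (by norm_num)
  have hexp := Real.add_one_le_exp (-1 / 48)
  linarith

lemma prHalf_card_le_div_eight {β : Type*} (B : Finset β) :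
    prHalf B (fun T => (T.card : ℝ) ≤ B.card / 8) ≤ Real.exp (-(B.card : ℝ) / 48) :=
  calc _ ≤ ((1 + 3⁻¹) / 2) ^ B.card / (3⁻¹ : ℝ) ^ ((B.card : ℝ) / 8) :=
        prHalf_card_le_le_div_rpow B (by norm_num) (by norm_num) _
    _ = (2 / 3 * (3 : ℝ) ^ (8⁻¹ : ℝ)) ^ B.card := by
        rw [Real.inv_rpow (by norm_num), div_inv_eq_mul, mul_pow,
          ← Real.rpow_natCast ((3 : ℝ) ^ (8⁻¹ : ℝ)) B.card,
          ← Real.rpow_mul (by norm_num)]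
        norm_num [div_eq_mul_inv, mul_comm]
    _ ≤ Real.exp (-1 / 48) ^ B.card := by gcongr; exact two_thirds_mul_rpow_le_exp
    _ = Real.exp (-(B.card : ℝ) / 48) := by rw [← Real.exp_nat_mul]; ring_nf

theorem statement12 {α : Type*} [DecidableEq α] (M : FinMatroid α) :
    prHalf M.E (fun S => (M.r S : ℝ) ≤ (M.r M.E : ℝ) / 8)
      ≤ Real.exp (-(M.r M.E : ℝ) / 48) := by
  obtain ⟨B, hB, hBcard⟩ := M.exists_indep_card_eq_rank
  rw [← hBcard]
  refine le_trans (prHalf_le_of_forall_inter hB.1 fun S _ hS => ?_) (prHalf_card_le_div_eight B)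
  exact (Nat.cast_le.2 (hB.card_inter_le_rank S)).trans hS

end
end

section
/- Let M = (N, I) be a finite matroid with rank function r, let S ⊆ N, and let λ ∈ ℝ≥0. If U_1 ⊆ S and U_2 ⊆ S both maximize |U| − λ·r(U) over all U ⊆ S, then U_1 ∪ U_2 also maximizes |U| − λ·r(U) over all U ⊆ S. Consequently, there is a unique inclusion-wise maximal maximizer of |U| − λ·r(U) over U ⊆ S. -/
open scoped BigOperators Classical
open MeasureTheory

noncomputable section

variable {α : Type*} [DecidableEq α]

/-! Since `r` is submodular and `lam ≥ 0`, the gain `|U| - lam * r U` is supermodular. For two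
maximizers `A`, `B`, the set `A ∩ B` gains at most as much as `B`, so supermodularity forces
`A ∪ B` to gain at least as much as `A`. Maximizers are thus closed under union, and the union
of all of them is the greatest one. -/

namespace FinMatroid

variable (M : FinMatroid α)

def gain (lam : ℝ) (U : Finset α) : ℝ :=
  (U.card : ℝ) - lam * M.r U

def IsMaxGain (S : Finset α) (lam : ℝ) (U : Finset α) : Prop :=
  U ⊆ S ∧ ∀ V ⊆ S, M.gain lam V ≤ M.gain lam U

variable {M}

theorem gain_add_gain_le_gain_union_add_gain_inter {lam : ℝ} (hlam : 0 ≤ lam)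
    (A B : Finset α) :
    M.gain lam A + M.gain lam B ≤ M.gain lam (A ∪ B) + M.gain lam (A ∩ B) := by
  have hcard : ((A ∪ B).card : ℝ) + (A ∩ B).card = A.card + B.card := by
    exact_mod_cast Finset.card_union_add_card_inter A B
  have hsubmod : (M.r (A ∪ B) : ℝ) + M.r (A ∩ B) ≤ M.r A + M.r B := by
    exact_mod_cast M.rank_submod A B
  unfold gain
  linarith [mul_le_mul_of_nonneg_left hsubmod hlam]

theorem IsMaxGain.union {S : Finset α} {lam : ℝ} (hlam : 0 ≤ lam) {A B : Finset α}
    (hA : M.IsMaxGain S lam A) (hB : M.IsMaxGain S lam B) :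
    M.IsMaxGain S lam (A ∪ B) := by
  refine ⟨Finset.union_subset hA.1 hB.1, fun V hV => (hA.2 V hV).trans ?_⟩
  have hinter := hB.2 (A ∩ B) (Finset.inter_subset_right.trans hB.1)
  linarith [hinter, gain_add_gain_le_gain_union_add_gain_inter (M := M) hlam A B]

variable (M)

theorem exists_isMaxGain (S : Finset α) (lam : ℝ) : ∃ U, M.IsMaxGain S lam U := by
  obtain ⟨U, hU, hmax⟩ :=
    S.powerset.exists_max_image (M.gain lam) ⟨∅, Finset.empty_mem_powerset S⟩
  exact ⟨U, Finset.mem_powerset.mp hU, fun V hV => hmax V (Finset.mem_powerset.mpr hV)⟩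

theorem existsUnique_greatest_isMaxGain (S : Finset α) {lam : ℝ} (hlam : 0 ≤ lam) :
    ∃! U, M.IsMaxGain S lam U ∧ ∀ V, M.IsMaxGain S lam V → V ⊆ U := by
  set F := S.powerset.filter (M.IsMaxGain S lam)
  have hmemF : ∀ {U}, M.IsMaxGain S lam U → U ∈ F := fun hU =>
    Finset.mem_filter.mpr ⟨Finset.mem_powerset.mpr hU.1, hU⟩
  obtain ⟨U₀, hU₀⟩ := M.exists_isMaxGain S lam
  have hne : F.Nonempty := ⟨U₀, hmemF hU₀⟩
  have hsup : M.IsMaxGain S lam (F.sup' hne id) :=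
    Finset.sup'_mem {U | M.IsMaxGain S lam U} (fun _ hA _ hB => hA.union hlam hB) F hne id
      fun U hU => (Finset.mem_filter.mp hU).2
  refine ⟨F.sup' hne id, ⟨hsup, fun V hV => Finset.le_sup' id (hmemF hV)⟩, ?_⟩
  rintro U ⟨hU, hUgreatest⟩
  exact (Finset.le_sup' id (hmemF hU)).antisymm (hUgreatest _ hsup)

end FinMatroid

theorem statement13 {α : Type*} [DecidableEq α] (M : FinMatroid α)
    (S : Finset α) (lam : ℝ) (hlam : 0 ≤ lam)
    (U1 U2 : Finset α) (hU1 : U1 ⊆ S) (hU2 : U2 ⊆ S)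
    (hmax1 : ∀ V ⊆ S, (V.card : ℝ) - lam * M.r V ≤ (U1.card : ℝ) - lam * M.r U1)
    (hmax2 : ∀ V ⊆ S, (V.card : ℝ) - lam * M.r V ≤ (U2.card : ℝ) - lam * M.r U2) :
    (∀ V ⊆ S, (V.card : ℝ) - lam * M.r V ≤
        (((U1 ∪ U2).card : ℝ)) - lam * M.r (U1 ∪ U2)) ∧
    (∃! U : Finset α, (U ⊆ S ∧
        ∀ V ⊆ S, (V.card : ℝ) - lam * M.r V ≤ (U.card : ℝ) - lam * M.r U) ∧
      ∀ V, (V ⊆ S ∧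
          ∀ V' ⊆ S, (V'.card : ℝ) - lam * M.r V' ≤ (V.card : ℝ) - lam * M.r V) →
        V ⊆ U) :=
  ⟨(FinMatroid.IsMaxGain.union hlam ⟨hU1, hmax1⟩ ⟨hU2, hmax2⟩).2,
    M.existsUnique_greatest_isMaxGain S hlam⟩

end
end
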